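/- Let n be a positive natural number, and for each i : Fin n let Aᵢ be a nonempty finite type and Qᵢ : Aᵢ → ℝ a function. Let F : (Fin n → ℝ) → ℝ be strictly increasing in each coordinate (i.e. for any x, y : Fin n → ℝ with x ≤ y pointwise and x j < y j for some j, one has F(x) < F(y)). Then the set of joint maximizers of u ↦ F(fun i => Qᵢ(uᵢ)) over ∀ i, Aᵢ equals the set of tuples u such that for every i, uᵢ maximizes Qᵢ over Aᵢ. -/
import Mathlib


/-- strictly increasing mixing gives exact IGM consistency. -/
theorem strict_mixing_igm (n : ℕ) (hn : 0 < n)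
    (A : Fin n → Type*) [∀ i, Fintype (A i)] [∀ i, Nonempty (A i)]
    (Q : ∀ i, A i → ℝ) (F : (Fin n → ℝ) → ℝ)
    (hF : ∀ x y : Fin n → ℝ, x ≤ y → (∃ j, x j < y j) → F x < F y) :
    {u : ∀ i, A i | ∀ v : ∀ i, A i, F (fun i => Q i (v i)) ≤ F (fun i => Q i (u i))} =
      {u : ∀ i, A i | ∀ i, ∀ a : A i, Q i a ≤ Q i (u i)} := by
  ext u
  simp only [Set.mem_setOf_eq]
  constructor
  · intro hu i a
    by_contra h
    push_neg at h
    have := hu (Function.update u i a)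
    have hlt : F (fun j => Q j (u j)) < F (fun j => Q j (Function.update u i a j)) := by
      apply hF
      · intro j
        by_cases hj : j = i
        · subst hj; simp [Function.update_self]; exact h.le
        · simp [Function.update_of_ne hj]
      · exact ⟨i, by simp [Function.update_self, h]⟩
    exact absurd this (not_le.mpr hlt)
  · intro hu v
    have hle : (fun i => Q i (v i)) ≤ fun i => Q i (u i) := fun i => hu i (v i)
    rcases eq_or_lt_of_le hle with heq | hlt
    · exact le_of_eq (congrArg F heq)
    · exact (hF _ _ hle (Pi.lt_def.mp hlt).2).le
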